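/- Let H be a complex Hilbert space, let S be a self-adjoint operator in H, and let T : dom S → H be a linear map such that ‖T f‖² ≤ a‖f‖² + b‖S f‖² for all f ∈ dom S, where a, b ≥ 0 and b < 1. Let σ₋ < σ₊ be real numbers with (σ₋, σ₊) ∩ σ(S) = ∅, and suppose σ₋' := σ₋ + √(a + b σ₋²) < σ₊ − √(a + b σ₊²) =: σ₊'. Then every λ ∈ ℂ with σ₋' < Re λ < σ₊' belongs to ρ(S + T), where S + T is the operator with domain dom S given by f ↦ S f + T f. -/

import Mathlib

noncomputable section

open Filter Topology

/-- `R` is the (bounded, everywhere defined) resolvent of the possibly unbounded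
operator `S` at the point `lam`: the range of `R` lies in the domain of `S`,
`(S - lam) ∘ R = id` on the whole space and `R ∘ (S - lam) = id` on the domain of `S`. -/
def ResolventAt {H : Type*} [NormedAddCommGroup H] [InnerProductSpace ℂ H]
    (S : H →ₗ.[ℂ] H) (lam : ℂ) (R : H →L[ℂ] H) : Prop :=
  (∀ f : H, ∃ h : R f ∈ S.domain, S ⟨R f, h⟩ - lam • R f = f) ∧
  ∀ g : S.domain, R (S g - lam • (g : H)) = g

/-- `lam` belongs to the resolvent set of `S`. -/
def InResolventSet {H : Type*} [NormedAddCommGroup H] [InnerProductSpace ℂ H]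
    (S : H →ₗ.[ℂ] H) (lam : ℂ) : Prop :=
  ∃ R : H →L[ℂ] H, ResolventAt S lam R

/-- The spectrum of a possibly unbounded operator. -/
def Spec {H : Type*} [NormedAddCommGroup H] [InnerProductSpace ℂ H]
    (S : H →ₗ.[ℂ] H) : Set ℂ :=
  {lam | ¬ InResolventSet S lam}

/-! Let `μ = Re λ` and `R₀ = (S - μ)⁻¹`. Since `S` is symmetric, `R₀` is self-adjoint, and the
gap `(σ₋, σ₊)` forces `σ(R₀) ⊆ [(σ₋ - μ)⁻¹, (σ₊ - μ)⁻¹]`: a point `s ≠ 0` of `σ(R₀)` gives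
`μ + s⁻¹ ∈ σ(S)`. For `f = R₀ h` the relative bound reads
`‖T f‖² ≤ (a + bμ²)‖R₀ h‖² + 2bμ Re⟪h, R₀ h⟫ + b‖h‖²`, a quadratic form in `R₀`. The convex
quadratic `(a + bμ²)x² + 2bμx + b - K` is nonpositive at both ends of the spectral interval for
`K = max(b, (a + bσ₋²)/(σ₋ - μ)², (a + bσ₊²)/(σ₊ - μ)²)`, and `K < 1` exactly because `Re λ`
lies in `(σ₋', σ₊')`. The functional calculus then gives `‖T f‖² ≤ K‖(S - μ)f‖² ≤ K‖(S - λ)f‖²`,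
so `T(S - λ)⁻¹` has norm `≤ √K < 1` and `(S + T - λ)⁻¹ = (S - λ)⁻¹(1 + T(S - λ)⁻¹)⁻¹`. -/

open scoped InnerProductSpace

lemma inv_mem_Ioo_of_notMem_Icc_inv {lo hi s : ℝ} (hlo : lo < 0) (hhi : 0 < hi)
    (hs : s ∉ Set.Icc lo⁻¹ hi⁻¹) : s ≠ 0 ∧ s⁻¹ ∈ Set.Ioo lo hi := by
  have hlo' := inv_lt_zero.2 hlo
  have hhi' := inv_pos.2 hhi
  simp only [Set.mem_Icc, not_and_or, not_le] at hs
  rcases lt_trichotomy s 0 with h | rfl | h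
  · have hs' : s < lo⁻¹ := hs.resolve_right (by linarith)
    exact ⟨h.ne, (lt_inv_of_neg hlo h).2 hs', (inv_lt_zero.2 h).trans hhi⟩
  · rcases hs with h | h <;> linarith
  · have hs' : hi⁻¹ < s := hs.resolve_left (by linarith)
    exact ⟨h.ne', hlo.trans (inv_pos.2 h), (inv_lt_comm₀ h hhi).2 hs'⟩

lemma quadratic_nonpos_of_mem_Icc {c₂ c₁ c₀ lo hi x : ℝ} (hc₂ : 0 ≤ c₂)
    (hlo : c₂ * lo ^ 2 + c₁ * lo + c₀ ≤ 0) (hhi : c₂ * hi ^ 2 + c₁ * hi + c₀ ≤ 0)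
    (hx : x ∈ Set.Icc lo hi) : c₂ * x ^ 2 + c₁ * x + c₀ ≤ 0 := by
  obtain ⟨h₁, h₂⟩ := hx
  rcases (h₁.trans h₂).eq_or_lt with rfl | hlohi
  · rwa [le_antisymm h₂ h₁]
  nlinarith [sub_pos.2 hlohi, mul_nonneg (sub_nonneg.2 h₂) (neg_nonneg.2 hlo),
    mul_nonneg (sub_nonneg.2 h₁) (neg_nonneg.2 hhi),
    mul_nonneg (mul_nonneg (mul_nonneg hc₂ (sub_nonneg.2 h₁)) (sub_nonneg.2 h₂))
      (sub_pos.2 hlohi).le]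

lemma quadratic_inv_nonpos {a b K μ d : ℝ} (hbK : b ≤ K)
    (h : a + b * (μ + d) ^ 2 ≤ K * d ^ 2) :
    (a + b * μ ^ 2) * d⁻¹ ^ 2 + 2 * b * μ * d⁻¹ + (b - K) ≤ 0 := by
  rcases eq_or_ne d 0 with rfl | hd
  · simpa using hbK
  have : (a + b * μ ^ 2) * d⁻¹ ^ 2 + 2 * b * μ * d⁻¹ + (b - K)
      = (a + b * (μ + d) ^ 2 - K * d ^ 2) / d ^ 2 := by
    field_simp
    ring
  rw [this]
  exact div_nonpos_of_nonpos_of_nonneg (by linarith) (sq_nonneg d)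

lemma exists_lt_one_of_lt {b x₁ y₁ x₂ y₂ : ℝ} (hb : b < 1) (h₁ : x₁ < y₁) (h₂ : x₂ < y₂)
    (hy₁ : 0 < y₁) (hy₂ : 0 < y₂) : ∃ K < 1, b ≤ K ∧ x₁ ≤ K * y₁ ∧ x₂ ≤ K * y₂ :=
  ⟨max b (max (x₁ / y₁) (x₂ / y₂)),
    max_lt hb (max_lt ((div_lt_one hy₁).2 h₁) ((div_lt_one hy₂).2 h₂)), le_max_left _ _,
    (div_le_iff₀ hy₁).1 (le_max_of_le_right (le_max_left _ _)),
    (div_le_iff₀ hy₂).1 (le_max_of_le_right (le_max_right _ _))⟩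

lemma isUnit_one_sub_smul_iff {𝕜 A : Type*} [Field 𝕜] [Ring A] [Algebra 𝕜 A] {a : A} {z : 𝕜}
    (hz : z ≠ 0) : IsUnit (1 - z • a) ↔ z⁻¹ ∉ spectrum 𝕜 a := by
  have h : 1 - z • a = Units.mk0 z hz • (z⁻¹ • 1 - a) := by
    rw [Units.smul_def, Units.val_mk0, smul_sub, smul_smul, mul_inv_cancel₀ hz, one_smul]
  rw [spectrum.notMem_iff, Algebra.algebraMap_eq_smul_one, h, isUnit_smul_iff]

section SelfAdjoint

variable {H : Type*} [NormedAddCommGroup H] [InnerProductSpace ℂ H] [CompleteSpace H]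
  {A : H →L[ℂ] H}

lemma IsSelfAdjoint.quadratic_form_nonpos (hA : IsSelfAdjoint A) {c₂ c₁ c₀ : ℝ}
    (hq : ∀ x ∈ spectrum ℝ A, c₂ * x ^ 2 + c₁ * x + c₀ ≤ 0) (h : H) :
    c₂ * ‖A h‖ ^ 2 + c₁ * (⟪h, A h⟫_ℂ).re + c₀ * ‖h‖ ^ 2 ≤ 0 := by
  have hP : cfc (fun x : ℝ => c₂ * x ^ 2 + c₁ * x + c₀) A ≤ 0 := cfc_nonpos _ _ hq
  rw [cfc_add (a := A) _ _, cfc_add (a := A) _ _, cfc_const_mul _ _ A, cfc_const_mul _ _ A,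
    cfc_pow_id A, cfc_id' ℝ A, cfc_const c₀ A] at hP
  have := ((ContinuousLinearMap.nonneg_iff_isPositive _).1 (neg_nonneg.2 hP)).re_inner_nonneg_right
    h
  have hAA : ⟪h, A (A h)⟫_ℂ = ⟪A h, A h⟫_ℂ := (hA.isSymmetric h (A h)).symm
  simp only [pow_two, Algebra.algebraMap_eq_smul_one, neg_add_rev, add_apply, neg_apply,
    smul_apply, one_apply_eq_self, mul_apply_eq_comp, inner_add_right, inner_neg_right,
    inner_smul_right_eq_smul, inner_self_eq_norm_sq_to_K, Complex.real_smul, hAA,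
    mul_one, RCLike.re_to_complex, Complex.add_re, Complex.neg_re,
    Complex.mul_re, Complex.ofReal_re, Complex.ofReal_im, mul_zero, sub_zero] at this
  linarith

lemma IsSelfAdjoint.quadratic_bound (hA : IsSelfAdjoint A) {a b K sm sp μ : ℝ} (ha : 0 ≤ a)
    (hb : 0 ≤ b) (hspec : spectrum ℝ A ⊆ Set.Icc (sm - μ)⁻¹ (sp - μ)⁻¹) (hbK : b ≤ K)
    (hKsm : a + b * sm ^ 2 ≤ K * (sm - μ) ^ 2) (hKsp : a + b * sp ^ 2 ≤ K * (sp - μ) ^ 2)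
    (h : H) : a * ‖A h‖ ^ 2 + b * ‖h + (μ : ℂ) • A h‖ ^ 2 ≤ K * ‖h‖ ^ 2 := by
  have hq := hA.quadratic_form_nonpos (c₂ := a + b * μ ^ 2) (c₁ := 2 * b * μ) (c₀ := b - K)
    (fun x hx => quadratic_nonpos_of_mem_Icc (by positivity)
      (quadratic_inv_nonpos hbK (by rwa [add_sub_cancel]))
      (quadratic_inv_nonpos hbK (by rwa [add_sub_cancel])) (hspec hx)) h
  have hexp :
      ‖h + (μ : ℂ) • A h‖ ^ 2 = ‖h‖ ^ 2 + 2 * μ * (⟪h, A h⟫_ℂ).re + μ ^ 2 * ‖A h‖ ^ 2 := by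
    rw [norm_add_sq (𝕜 := ℂ), inner_smul_right, norm_smul]
    simp only [RCLike.re_to_complex, Complex.re_ofReal_mul, Complex.norm_real, Real.norm_eq_abs,
      mul_pow, sq_abs]
    ring
  rw [hexp]
  linarith

end SelfAdjoint

lemma LinearPMap.IsFormalAdjoint.norm_sub_smul_sq {H : Type*} [NormedAddCommGroup H]
    [InnerProductSpace ℂ H] {S : H →ₗ.[ℂ] H} (hS : S.IsFormalAdjoint S) (lam : ℂ)
    (f : S.domain) :
    ‖S f - lam • (f : H)‖ ^ 2
      = ‖S f - (lam.re : ℂ) • (f : H)‖ ^ 2 + lam.im ^ 2 * ‖(f : H)‖ ^ 2 := by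
  have hSf : (⟪S f, (f : H)⟫_ℂ).im = 0 :=
    Complex.conj_eq_iff_im.1 (by rw [inner_conj_symm]; exact (hS f f).symm)
  have hreal : (⟪S f - (lam.re : ℂ) • (f : H), (f : H)⟫_ℂ).im = 0 := by
    simp [hSf, ← Complex.ofReal_pow]
  have hsplit : S f - lam • (f : H)
      = (S f - (lam.re : ℂ) • (f : H)) - (lam.im * Complex.I) • (f : H) := by
    conv_lhs => rw [← Complex.re_add_im lam]
    module
  rw [hsplit, norm_sub_sq (𝕜 := ℂ), norm_smul, inner_smul_right]
  simp only [RCLike.re_to_complex, Complex.mul_re, Complex.mul_im, Complex.ofReal_re,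
    Complex.ofReal_im, Complex.I_re, Complex.I_im, hreal, norm_mul, Complex.norm_real,
    Complex.norm_I, Real.norm_eq_abs, mul_one, mul_pow, sq_abs]
  ring

section Resolvent

variable {H : Type*} [NormedAddCommGroup H] [InnerProductSpace ℂ H]
  {S : H →ₗ.[ℂ] H} {t : ℂ} {R : H →L[ℂ] H}

namespace ResolventAt

lemma mem_domain (hR : ResolventAt S t R) (f : H) : R f ∈ S.domain := (hR.1 f).1

lemma apply_sub_smul (hR : ResolventAt S t R) (f : H) (hf : R f ∈ S.domain) :
    S ⟨R f, hf⟩ - t • R f = f :=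
  (hR.1 f).2

lemma resolvent_identity {t' : ℂ} {R' : H →L[ℂ] H} (hR : ResolventAt S t R)
    (hR' : ResolventAt S t' R') (g : H) : R g + (t' - t) • R (R' g) = R' g := by
  have hm := hR'.mem_domain g
  have h : R (S ⟨R' g, hm⟩ - t • R' g) = R' g := hR.2 ⟨R' g, hm⟩
  have hg : S ⟨R' g, hm⟩ - t • R' g = g + (t' - t) • R' g := by
    linear_combination (norm := module) hR'.apply_sub_smul g hm
  rwa [hg, map_add, map_smul] at h

lemma isUnit_one_sub_smul {c : ℂ} {R' : H →L[ℂ] H} (hR : ResolventAt S t R)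
    (hR' : ResolventAt S (t + c) R') : IsUnit (1 - c • R) := by
  refine ⟨⟨1 - c • R, 1 + c • R', ?_, ?_⟩, rfl⟩ <;> ext g
  · have h := hR.resolvent_identity hR' g
    simp only [mul_apply_eq_comp, sub_apply, add_apply, smul_apply, one_apply_eq_self, map_add,
      map_smul, add_sub_cancel_left] at h ⊢
    linear_combination (norm := module) -(c • h)
  · have h := hR'.resolvent_identity hR g
    simp only [mul_apply_eq_comp, sub_apply, add_apply, smul_apply, one_apply_eq_self, map_sub,
      map_smul, sub_add_cancel_left] at h ⊢
    linear_combination (norm := module) c • h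

lemma comp_symm {t' : ℂ} (hR : ResolventAt S t R) (F : S.domain →ₗ[ℂ] H) (U : H ≃L[ℂ] H)
    (hU : ∀ g : S.domain, F g - t' • (g : H) = U (S g - t • (g : H))) :
    ResolventAt ⟨S.domain, F⟩ t' (R ∘L (U.symm : H →L[ℂ] H)) := by
  refine ⟨fun f => ⟨hR.mem_domain _, ?_⟩, fun g => ?_⟩
  · have hm := hR.mem_domain (U.symm f)
    change F ⟨_, hm⟩ - t' • R (U.symm f) = f
    rw [hU ⟨_, hm⟩, hR.apply_sub_smul _ hm, U.apply_symm_apply]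
  · change R (U.symm (F g - t' • (g : H))) = g
    rw [hU, U.symm_apply_apply]
    exact hR.2 g

lemma add_of_isUnit {c : ℂ} (hR : ResolventAt S t R) (hU : IsUnit (1 - c • R)) :
    ResolventAt S (t + c) (R ∘L ((ContinuousLinearEquiv.ofUnit hU.unit).symm : H →L[ℂ] H)) :=
  hR.comp_symm S.toFun _ fun g => by
    change S g - (t + c) • (g : H) = (1 - c • R) (S g - t • (g : H))
    rw [sub_apply, one_apply_eq_self, smul_apply, hR.2 g]
    module

lemma spectrum_subset_Icc {sm sp μ : ℝ} (hR : ResolventAt S μ R) (hsm : sm < μ) (hsp : μ < sp)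
    (hgap : ∀ t ∈ Set.Ioo sm sp, InResolventSet S t) :
    spectrum ℝ R ⊆ Set.Icc (sm - μ)⁻¹ (sp - μ)⁻¹ := by
  intro s hs
  by_contra hIcc
  obtain ⟨hs0, hsm', hsp'⟩ := inv_mem_Ioo_of_notMem_Icc_inv (sub_neg.2 hsm) (sub_pos.2 hsp) hIcc
  obtain ⟨R', hR'⟩ := hgap (μ + s⁻¹) ⟨by linarith, by linarith⟩
  have hU := hR.isUnit_one_sub_smul (c := (s : ℂ)⁻¹) (by exact_mod_cast hR')
  rw [isUnit_one_sub_smul_iff (by exact_mod_cast inv_ne_zero hs0), inv_inv] at hU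
  exact hU (spectrum.algebraMap_mem ℂ hs)

lemma norm_sq_le_of_re_eq (hS : S.IsFormalAdjoint S) {μ : ℝ} (hR : ResolventAt S μ R)
    {a b K : ℝ} (hK : 0 ≤ K)
    (hbound : ∀ h : H, a * ‖R h‖ ^ 2 + b * ‖h + (μ : ℂ) • R h‖ ^ 2 ≤ K * ‖h‖ ^ 2)
    {lam : ℂ} (hlam : lam.re = μ) (f : S.domain) :
    a * ‖(f : H)‖ ^ 2 + b * ‖S f‖ ^ 2 ≤ K * ‖S f - lam • (f : H)‖ ^ 2 := by
  have hRf : R (S f - (μ : ℂ) • (f : H)) = f := hR.2 f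
  have hSf : S f - (μ : ℂ) • (f : H) + (μ : ℂ) • (f : H) = S f := sub_add_cancel _ _
  have := hbound (S f - (μ : ℂ) • (f : H))
  rw [hRf, hSf] at this
  rw [hS.norm_sub_smul_sq, hlam]
  nlinarith [mul_nonneg hK (mul_nonneg (sq_nonneg lam.im) (sq_nonneg ‖(f : H)‖))]

end ResolventAt

theorem InResolventSet.add [CompleteSpace H] (h : InResolventSet S t) (T : S.domain →ₗ[ℂ] H)
    {c : ℝ} (hc : c < 1) (hT : ∀ f : S.domain, ‖T f‖ ≤ c * ‖S f - t • (f : H)‖) :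
    InResolventSet ⟨S.domain, S.toFun + T⟩ t := by
  obtain ⟨R, hR⟩ := h
  let B : H →L[ℂ] H := (T ∘ₗ (R : H →ₗ[ℂ] H).codRestrict S.domain hR.mem_domain).mkContinuous c
    fun x => (hT ⟨R x, hR.mem_domain x⟩).trans_eq (by rw [hR.apply_sub_smul])
  have hB : ‖-B‖ < 1 := by
    rw [norm_neg]
    exact (LinearMap.mkContinuous_norm_le' _ _).trans_lt (max_lt hc one_pos)
  refine ⟨_, hR.comp_symm _ (.ofUnit (Units.oneSub (-B) hB)) fun g => ?_⟩
  have hBg : B (S g - t • (g : H)) = T g := congrArg T (Subtype.ext (hR.2 g))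
  change S g + T g - t • (g : H) = (1 - -B) (S g - t • (g : H))
  rw [sub_neg_eq_add, add_apply, one_apply_eq_self, hBg]
  abel

end Resolvent

section Symmetric

variable {H : Type*} [NormedAddCommGroup H] [InnerProductSpace ℂ H] [CompleteSpace H]
  {S : H →ₗ.[ℂ] H} {R : H →L[ℂ] H}

namespace ResolventAt

lemma isSelfAdjoint (hS : S.IsFormalAdjoint S) {μ : ℝ} (hR : ResolventAt S μ R) :
    IsSelfAdjoint R := by
  refine ContinuousLinearMap.isSelfAdjoint_iff_isSymmetric.mpr fun x y => ?_
  have hx := hR.mem_domain x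
  have hy := hR.mem_domain y
  change ⟪R x, y⟫_ℂ = ⟪x, R y⟫_ℂ
  conv_lhs => rw [← hR.apply_sub_smul y hy]
  conv_rhs => rw [← hR.apply_sub_smul x hx]
  rw [inner_sub_right, inner_sub_left, inner_smul_right, inner_smul_left, Complex.conj_ofReal,
    hS ⟨_, hx⟩ ⟨_, hy⟩]

lemma inResolventSet_of_re_eq (hS : S.IsFormalAdjoint S) {μ : ℝ} (hR : ResolventAt S μ R)
    {lam : ℂ} (hlam : lam.re = μ) : InResolventSet S lam := by
  obtain ⟨c, rfl⟩ : ∃ c, lam = μ + c := ⟨lam - μ, by ring⟩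
  have hc : c.re = 0 := by simpa using hlam
  have hU : IsUnit (1 - c • R) := by
    rcases eq_or_ne c 0 with rfl | hc0
    · simp
    rw [isUnit_one_sub_smul_iff hc0]
    intro hmem
    apply inv_ne_zero hc0
    rw [(hR.isSelfAdjoint hS).mem_spectrum_eq_re hmem, Complex.inv_re, hc, zero_div,
      Complex.ofReal_zero]
  exact ⟨_, hR.add_of_isUnit hU⟩

end ResolventAt

end Symmetric

variable {H K : Type*}
  [NormedAddCommGroup H] [InnerProductSpace ℂ H] [CompleteSpace H]
  [NormedAddCommGroup K] [InnerProductSpace ℂ K] [CompleteSpace K]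

theorem stmt14_general
    (S : H →ₗ.[ℂ] H) (hS : IsSelfAdjoint S)
    (T : S.domain →ₗ[ℂ] H)
    (a b : ℝ) (ha : 0 ≤ a) (hb0 : 0 ≤ b) (hb1 : b < 1)
    (hT : ∀ f : S.domain, ‖T f‖ ^ 2 ≤ a * ‖(f : H)‖ ^ 2 + b * ‖S f‖ ^ 2)
    (sm sp : ℝ)
    (hgap : ∀ t : ℝ, t ∈ Set.Ioo sm sp → (t : ℂ) ∉ Spec S)
    (ST : H →ₗ.[ℂ] H) (hST : ST = ⟨S.domain, S.toFun + T⟩) :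
    ∀ lam : ℂ, sm + Real.sqrt (a + b * sm ^ 2) < lam.re →
      lam.re < sp - Real.sqrt (a + b * sp ^ 2) → InResolventSet ST lam := by
  subst hST
  intro lam hlo hhi
  have hsymm : S.IsFormalAdjoint S := by
    simpa only [LinearPMap.isSelfAdjoint_def.1 hS] using
      LinearPMap.adjoint_isFormalAdjoint hS.dense_domain
  have hres : ∀ t ∈ Set.Ioo sm sp, InResolventSet S t := fun t ht => not_not.1 (hgap t ht)
  set μ := lam.re
  have hsm : a + b * sm ^ 2 < (sm - μ) ^ 2 := by
    rw [← neg_sub, neg_sq]; exact Real.lt_sq_of_sqrt_lt (by linarith)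
  have hsp : a + b * sp ^ 2 < (sp - μ) ^ 2 := Real.lt_sq_of_sqrt_lt (by linarith)
  have hsmμ : sm < μ := by linarith [Real.sqrt_nonneg (a + b * sm ^ 2)]
  have hμsp : μ < sp := by linarith [Real.sqrt_nonneg (a + b * sp ^ 2)]
  have hdsm : 0 < (sm - μ) ^ 2 := (by positivity : (0 : ℝ) ≤ a + b * sm ^ 2).trans_lt hsm
  have hdsp : 0 < (sp - μ) ^ 2 := (by positivity : (0 : ℝ) ≤ a + b * sp ^ 2).trans_lt hsp
  obtain ⟨K, hK, hbK, hKsm, hKsp⟩ := exists_lt_one_of_lt hb1 hsm hsp hdsm hdsp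
  have hK0 : 0 ≤ K := hb0.trans hbK
  obtain ⟨R₀, hR₀⟩ := hres μ ⟨hsmμ, hμsp⟩
  have hbound := (hR₀.isSelfAdjoint hsymm).quadratic_bound ha hb0
    (hR₀.spectrum_subset_Icc hsmμ hμsp hres) hbK hKsm hKsp
  have hsqrtK : √K < 1 := (Real.sqrt_lt' one_pos).2 (by rwa [one_pow])
  refine (hR₀.inResolventSet_of_re_eq hsymm rfl).add T hsqrtK fun f => ?_
  refine (pow_le_pow_iff_left₀ (norm_nonneg _) (by positivity) two_ne_zero).1 ?_
  rw [mul_pow, Real.sq_sqrt hK0]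
  exact (hT f).trans (hR₀.norm_sq_le_of_re_eq hsymm hK0 hbound rfl f)

/-- **Remark 3.6 (preservation of spectral gaps).** Let `S` be self-adjoint,
`‖T f‖² ≤ a ‖f‖² + b ‖S f‖²` with `b < 1`, and let `(σ₋, σ₊)` be a spectral gap of `S`
with `σ₋' := σ₋ + √(a + b σ₋²) < σ₊ - √(a + b σ₊²) =: σ₊'`.  Then every `lam` with
`σ₋' < Re lam < σ₊'` belongs to `ρ(S + T)`. -/
theorem stmt14
    (S : H →ₗ.[ℂ] H) (hS : IsSelfAdjoint S)
    (T : S.domain →ₗ[ℂ] H)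
    (a b : ℝ) (ha : 0 ≤ a) (hb0 : 0 ≤ b) (hb1 : b < 1)
    (hT : ∀ f : S.domain, ‖T f‖ ^ 2 ≤ a * ‖(f : H)‖ ^ 2 + b * ‖S f‖ ^ 2)
    (sm sp : ℝ) (hsmsp : sm < sp)
    (hgap : ∀ t : ℝ, t ∈ Set.Ioo sm sp → (t : ℂ) ∉ Spec S)
    (hsep : sm + Real.sqrt (a + b * sm ^ 2) < sp - Real.sqrt (a + b * sp ^ 2))
    (ST : H →ₗ.[ℂ] H) (hST : ST = ⟨S.domain, S.toFun + T⟩) :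
    ∀ lam : ℂ, sm + Real.sqrt (a + b * sm ^ 2) < lam.re →
      lam.re < sp - Real.sqrt (a + b * sp ^ 2) → InResolventSet ST lam :=
  stmt14_general S hS T a b ha hb0 hb1 hT sm sp hgap ST hST
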